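/- Let γ ∈ (-2, 0). For v, v_*, w, w_* ∈ ℝ³ with v ≠ v_* and w ≠ w_*, write Δ(v,v_*,w,w_*) := 2(v−w)·(b(v−v_*) − b(w−w_*)) + ‖σ(v−v_*) − σ(w−w_*)‖² with b(X) = -2|X|^γ X, σ(X) = |X|^{γ/2−1}(|X|²I − X⊗X). Then Δ = Δ₁ + Δ₂, where Δ₁(v,v_*,w,w_*) := ((v−w)+(v_*−w_*))·(b(v−v_*) − b(w−w_*)) satisfies the antisymmetry Δ₁(v,v_*,w,w_*) = −Δ₁(v_*,v,w_*,w), and Δ₂ satisfies Δ₂ ≤ 4(|v−w|² + |v_*−w_*|²) K(|v−v_*|, |w−w_*|) where K(x,y) := (min(x,y))^{1+γ} / max(x,y). -/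

import Mathlib

open Matrix

noncomputable section

/-- Frobenius norm of a 3×3 real matrix. -/
def frob (M : Matrix (Fin 3) (Fin 3) ℝ) : ℝ := Real.sqrt (Matrix.trace (M * Mᵀ))

/-- The Landau drift kernel `b(X) = -2 |X|^γ X`. -/
def bKer (γ : ℝ) (X : EuclideanSpace ℝ (Fin 3)) : EuclideanSpace ℝ (Fin 3) :=
  (-2 * ‖X‖ ^ γ) • X

/-- The matrix `σ(X) = |X|^{γ/2 - 1} (|X|² I − X ⊗ X)`. -/
def sigmaMat (γ : ℝ) (X : EuclideanSpace ℝ (Fin 3)) : Matrix (Fin 3) (Fin 3) ℝ :=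
  ‖X‖ ^ (γ / 2 - 1) •
    (‖X‖ ^ 2 • (1 : Matrix (Fin 3) (Fin 3) ℝ) - Matrix.of fun i j => X i * X j)

/-- `Δ(v,v_*,w,w_*) = 2(v−w)·(b(v−v_*) − b(w−w_*)) + ‖σ(v−v_*) − σ(w−w_*)‖²`. -/
def Delta (γ : ℝ) (v vs w ws : EuclideanSpace ℝ (Fin 3)) : ℝ :=
  2 * (inner ℝ (v - w) (bKer γ (v - vs) - bKer γ (w - ws)) : ℝ) +
    frob (sigmaMat γ (v - vs) - sigmaMat γ (w - ws)) ^ 2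

/-- `Δ₁(v,v_*,w,w_*) = ((v−w)+(v_*−w_*))·(b(v−v_*) − b(w−w_*))`. -/
def Delta1 (γ : ℝ) (v vs w ws : EuclideanSpace ℝ (Fin 3)) : ℝ :=
  (inner ℝ ((v - w) + (vs - ws)) (bKer γ (v - vs) - bKer γ (w - ws)) : ℝ)

/-- The kernel `K(x,y) = (min(x,y))^{1+γ} / max(x,y)`. -/
def Kker (γ x y : ℝ) : ℝ := (min x y) ^ (1 + γ) / max x y

/-!
Write `X = v - v_*`, `Y = w - w_*`, `x = |X|`, `y = |Y|`, `s = X·Y`, `p = x^{γ/2}`, `q = y^{γ/2}`.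
Then `b(X) = -2p²X`, `σ(X) = (p/x)(x²I - X⊗X)`, and the Frobenius inner product of
`x²I - X⊗X` and `y²I - Y⊗Y` is `x²y² + s²` in dimension 3. Hence
`Δ₂ = (X - Y)·(b(X) - b(Y)) + ‖σ(X) - σ(Y)‖² = 2s(p - q)² - 2pq(xy - s)²/(xy) ≤ 2xy(p - q)²`.
For `x ≤ y` we have `q ≤ p` and `xp ≤ yq` (as `t ↦ t^{1+γ/2}` increases), so `y(p - q) ≤ (y - x)p`
and `xy(p - q)² ≤ (x - y)² x^{1+γ}/y = (x - y)² K(x,y)`. Finally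
`(x - y)² ≤ |X - Y|² ≤ 2(|v - w|² + |v_* - w_*|²)`. The antisymmetry of `Δ₁` is the oddness of `b`.
-/

section perpMat

variable {ι : Type*} [Fintype ι]

lemma norm_sq_eq_dotProduct (X : EuclideanSpace ℝ ι) : ‖X‖ ^ 2 = ⇑X ⬝ᵥ ⇑X := by
  rw [← real_inner_self_eq_norm_sq, EuclideanSpace.inner_eq_star_dotProduct, star_trivial]

variable [DecidableEq ι]

def perpMat (X : EuclideanSpace ℝ ι) : Matrix ι ι ℝ := ‖X‖ ^ 2 • 1 - vecMulVec X X

lemma perpMat_transpose (X : EuclideanSpace ℝ ι) : (perpMat X)ᵀ = perpMat X := by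
  simp [perpMat, transpose_vecMulVec]

lemma trace_perpMat_mul_perpMat (X Y : EuclideanSpace ℝ ι) :
    trace (perpMat X * perpMat Y) =
      (Fintype.card ι - 2) * (‖X‖ ^ 2 * ‖Y‖ ^ 2) + inner ℝ X Y ^ 2 := by
  have hXY : inner ℝ X Y = ⇑X ⬝ᵥ ⇑Y := by
    rw [EuclideanSpace.inner_eq_star_dotProduct, star_trivial, dotProduct_comm]
  simp only [perpMat, sub_mul, mul_sub, smul_mul_smul, smul_mul, Matrix.mul_smul, one_mul, mul_one,
    vecMulVec_mul_vecMulVec, trace_sub, trace_smul, trace_one, trace_vecMulVec, dotProduct_smul,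
    smul_eq_mul, hXY, norm_sq_eq_dotProduct]
  ring

end perpMat

lemma trace_mul_transpose_nonneg {m n : Type*} [Fintype m] [Fintype n]
    (M : Matrix m n ℝ) : 0 ≤ trace (M * Mᵀ) := by
  simpa [conjTranspose_eq_transpose_of_trivial] using
    (posSemidef_self_mul_conjTranspose M).trace_nonneg

lemma frob_sq (M : Matrix (Fin 3) (Fin 3) ℝ) : frob M ^ 2 = trace (M * Mᵀ) :=
  Real.sq_sqrt (trace_mul_transpose_nonneg M)

lemma frob_sub_sq (A B : Matrix (Fin 3) (Fin 3) ℝ) :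
    frob (A - B) ^ 2 = frob A ^ 2 + frob B ^ 2 - 2 * trace (A * Bᵀ) := by
  have hBA : trace (B * Aᵀ) = trace (A * Bᵀ) := by
    rw [← trace_transpose, transpose_mul, transpose_transpose]
  simp only [frob_sq, transpose_sub, sub_mul, mul_sub, trace_sub, hBA]
  ring

lemma frob_smul_perpMat_sub_sq (a b : ℝ) (X Y : EuclideanSpace ℝ (Fin 3)) :
    frob (a • perpMat X - b • perpMat Y) ^ 2 =
      2 * a ^ 2 * ‖X‖ ^ 4 + 2 * b ^ 2 * ‖Y‖ ^ 4
        - 2 * a * b * (‖X‖ ^ 2 * ‖Y‖ ^ 2 + inner ℝ X Y ^ 2) := by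
  rw [frob_sub_sq]
  simp only [frob_sq, transpose_smul, perpMat_transpose, smul_mul_smul, trace_smul,
    trace_perpMat_mul_perpMat, real_inner_self_eq_norm_sq, smul_eq_mul, Fintype.card_fin]
  ring

lemma sigmaMat_eq_smul_perpMat (γ : ℝ) (X : EuclideanSpace ℝ (Fin 3)) :
    sigmaMat γ X = ‖X‖ ^ (γ / 2 - 1) • perpMat X :=
  rfl

lemma rpow_half_sq {x : ℝ} (hx : 0 ≤ x) (γ : ℝ) : (x ^ (γ / 2)) ^ 2 = x ^ γ := by
  rw [← Real.rpow_mul_natCast hx]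
  norm_num

lemma inner_sub_bKer_add_frob_sigmaMat_sub_sq (γ : ℝ) {X Y : EuclideanSpace ℝ (Fin 3)}
    (hX : X ≠ 0) (hY : Y ≠ 0) :
    inner ℝ (X - Y) (bKer γ X - bKer γ Y) + frob (sigmaMat γ X - sigmaMat γ Y) ^ 2 =
      2 * ((‖X‖ ^ (γ / 2)) ^ 2 + (‖Y‖ ^ (γ / 2)) ^ 2) * inner ℝ X Y
        - 2 * (‖X‖ ^ (γ / 2) * ‖Y‖ ^ (γ / 2))
          * (‖X‖ ^ 2 * ‖Y‖ ^ 2 + inner ℝ X Y ^ 2) / (‖X‖ * ‖Y‖) := by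
  have hx : ‖X‖ ≠ 0 := norm_ne_zero_iff.2 hX
  have hy : ‖Y‖ ≠ 0 := norm_ne_zero_iff.2 hY
  simp only [sigmaMat_eq_smul_perpMat, frob_smul_perpMat_sub_sq, Real.rpow_sub_one hx,
    Real.rpow_sub_one hy, bKer, ← rpow_half_sq (norm_nonneg X) γ,
    ← rpow_half_sq (norm_nonneg Y) γ, inner_sub_left, inner_sub_right,
    real_inner_smul_right, real_inner_self_eq_norm_sq, real_inner_comm X Y]
  field_simp
  ring

lemma sq_add_sq_mul_sub_mul_div_le {x y p q s : ℝ} (hx : 0 < x) (hy : 0 < y) (hp : 0 ≤ p)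
    (hq : 0 ≤ q) (hs : s ≤ x * y) :
    2 * (p ^ 2 + q ^ 2) * s - 2 * (p * q) * (x ^ 2 * y ^ 2 + s ^ 2) / (x * y) ≤
      2 * (x * y) * (p - q) ^ 2 := by
  have hxy : 0 < x * y := mul_pos hx hy
  have hsplit : 2 * (p ^ 2 + q ^ 2) * s - 2 * (p * q) * (x ^ 2 * y ^ 2 + s ^ 2) / (x * y) =
      2 * s * (p - q) ^ 2 - 2 * (p * q) * (x * y - s) ^ 2 / (x * y) := by
    field_simp
    ring
  have hrem : 0 ≤ 2 * (p * q) * (x * y - s) ^ 2 / (x * y) := by positivity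
  rw [hsplit]
  nlinarith [mul_le_mul_of_nonneg_right hs (sq_nonneg (p - q))]

lemma mul_mul_rpow_sub_rpow_sq_le_of_le {γ x y : ℝ} (hγ₁ : -2 ≤ γ) (hγ₂ : γ ≤ 0) (hx : 0 < x)
    (hxy : x ≤ y) :
    x * y * (x ^ (γ / 2) - y ^ (γ / 2)) ^ 2 ≤ (x - y) ^ 2 * (x ^ (1 + γ) / y) := by
  have hy : 0 < y := hx.trans_le hxy
  set p := x ^ (γ / 2)
  set q := y ^ (γ / 2)
  have hqp : q ≤ p := Real.rpow_le_rpow_of_nonpos hx hxy (by linarith)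
  have hxp_le_yq : x * p ≤ y * q := by
    have h := Real.rpow_le_rpow hx.le hxy (show 0 ≤ 1 + γ / 2 by linarith)
    rwa [Real.rpow_add hx, Real.rpow_add hy, Real.rpow_one, Real.rpow_one] at h
  have hlin : y * (p - q) ≤ (y - x) * p := by linarith
  have hsq : (y * (p - q)) ^ 2 ≤ ((y - x) * p) ^ 2 :=
    pow_le_pow_left₀ (mul_nonneg hy.le (sub_nonneg.2 hqp)) hlin 2
  have hx1γ : x ^ (1 + γ) = x * p ^ 2 := by
    rw [Real.rpow_add hx, Real.rpow_one, rpow_half_sq hx.le]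
  calc x * y * (p - q) ^ 2 = x / y * (y * (p - q)) ^ 2 := by field_simp
    _ ≤ x / y * ((y - x) * p) ^ 2 := by gcongr
    _ = (x - y) ^ 2 * (x ^ (1 + γ) / y) := by rw [hx1γ]; ring

lemma Kker_nonneg (γ : ℝ) {x y : ℝ} (hx : 0 ≤ x) (hy : 0 ≤ y) : 0 ≤ Kker γ x y :=
  div_nonneg (Real.rpow_nonneg (le_min hx hy) _) (le_max_of_le_left hx)

lemma mul_mul_rpow_sub_rpow_sq_le_Kker {γ x y : ℝ} (hγ₁ : -2 ≤ γ) (hγ₂ : γ ≤ 0) (hx : 0 < x)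
    (hy : 0 < y) :
    x * y * (x ^ (γ / 2) - y ^ (γ / 2)) ^ 2 ≤ (x - y) ^ 2 * Kker γ x y := by
  rcases le_total x y with hxy | hyx
  · rw [Kker, min_eq_left hxy, max_eq_right hxy]
    exact mul_mul_rpow_sub_rpow_sq_le_of_le hγ₁ hγ₂ hx hxy
  · rw [Kker, min_eq_right hyx, max_eq_left hyx]
    convert mul_mul_rpow_sub_rpow_sq_le_of_le hγ₁ hγ₂ hy hyx using 1 <;> ring

lemma Delta1_eq_neg_Delta1_swap (γ : ℝ) (v vs w ws : EuclideanSpace ℝ (Fin 3)) :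
    Delta1 γ v vs w ws = -Delta1 γ vs v ws w := by
  have hb (X : EuclideanSpace ℝ (Fin 3)) : bKer γ (-X) = -bKer γ X := by simp [bKer]
  rw [Delta1, Delta1, ← neg_sub v vs, ← neg_sub w ws, hb, hb, add_comm (vs - ws),
    ← neg_sub', inner_neg_right, neg_neg]

lemma Delta_sub_Delta1 (γ : ℝ) (v vs w ws : EuclideanSpace ℝ (Fin 3)) :
    Delta γ v vs w ws - Delta1 γ v vs w ws =
      inner ℝ ((v - vs) - (w - ws)) (bKer γ (v - vs) - bKer γ (w - ws))
        + frob (sigmaMat γ (v - vs) - sigmaMat γ (w - ws)) ^ 2 := by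
  rw [Delta, Delta1, sub_sub_sub_comm]
  simp only [inner_add_left, inner_sub_left]
  ring

lemma norm_sub_sq_le_two_mul {E : Type*} [SeminormedAddCommGroup E] (a b : E) :
    ‖a - b‖ ^ 2 ≤ 2 * (‖a‖ ^ 2 + ‖b‖ ^ 2) := by
  nlinarith [norm_sub_le a b, norm_nonneg (a - b), sq_nonneg (‖a‖ - ‖b‖)]

/-- for `γ ∈ (-2,0)`, writing `Δ = Δ₁ + Δ₂`, the part `Δ₁` is antisymmetric,
i.e. `Δ₁(v,v_*,w,w_*) = −Δ₁(v_*,v,w_*,w)`, and `Δ₂ = Δ − Δ₁` satisfies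
`Δ₂ ≤ 4 (|v−w|² + |v_*−w_*|²) K(|v−v_*|, |w−w_*|)`. -/
theorem statement8 (γ : ℝ) (hγ : γ ∈ Set.Ioo (-2 : ℝ) 0)
    (v vs w ws : EuclideanSpace ℝ (Fin 3)) (hv : v ≠ vs) (hw : w ≠ ws) :
    Delta1 γ v vs w ws = - Delta1 γ vs v ws w ∧
    Delta γ v vs w ws - Delta1 γ v vs w ws ≤
      4 * (‖v - w‖ ^ 2 + ‖vs - ws‖ ^ 2) * Kker γ ‖v - vs‖ ‖w - ws‖ := by
  refine ⟨Delta1_eq_neg_Delta1_swap γ v vs w ws, ?_⟩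
  set X := v - vs
  set Y := w - ws
  have hx : 0 < ‖X‖ := norm_pos_iff.2 (sub_ne_zero.2 hv)
  have hy : 0 < ‖Y‖ := norm_pos_iff.2 (sub_ne_zero.2 hw)
  have hK := Kker_nonneg γ hx.le hy.le
  have hXY : ‖X - Y‖ ^ 2 ≤ 2 * (‖v - w‖ ^ 2 + ‖vs - ws‖ ^ 2) := by
    rw [show X - Y = (v - w) - (vs - ws) from sub_sub_sub_comm v vs w ws]
    exact norm_sub_sq_le_two_mul _ _
  calc Delta γ v vs w ws - Delta1 γ v vs w ws
      ≤ 2 * (‖X‖ * ‖Y‖) * (‖X‖ ^ (γ / 2) - ‖Y‖ ^ (γ / 2)) ^ 2 := by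
        rw [Delta_sub_Delta1, inner_sub_bKer_add_frob_sigmaMat_sub_sq γ (sub_ne_zero.2 hv)
          (sub_ne_zero.2 hw)]
        exact sq_add_sq_mul_sub_mul_div_le hx hy (by positivity) (by positivity)
          (real_inner_le_norm X Y)
    _ ≤ 2 * ((‖X‖ - ‖Y‖) ^ 2 * Kker γ ‖X‖ ‖Y‖) := by
        rw [mul_assoc 2]
        exact mul_le_mul_of_nonneg_left
          (mul_mul_rpow_sub_rpow_sq_le_Kker hγ.1.le hγ.2.le hx hy) zero_le_two
    _ ≤ 2 * (‖X - Y‖ ^ 2 * Kker γ ‖X‖ ‖Y‖) := by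
        have h := abs_le.1 (abs_norm_sub_norm_le X Y)
        exact mul_le_mul_of_nonneg_left (mul_le_mul_of_nonneg_right (sq_le_sq' h.1 h.2) hK)
          zero_le_two
    _ ≤ 4 * (‖v - w‖ ^ 2 + ‖vs - ws‖ ^ 2) * Kker γ ‖X‖ ‖Y‖ := by nlinarith
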